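/- For a square complex matrix 𝒜 of size n×n, ρ(|𝒜|) < 1 holds if and only if there exists a real vector w with all entries strictly positive such that ‖𝒜‖_∞^w < 1. -/

import Mathlib

open Matrix

/-- Spectral radius of a real square matrix: the supremum of the moduli of its
complex eigenvalues. -/
noncomputable def specRad {m : Type*} [Fintype m] [DecidableEq m]
    (A : Matrix m m ℝ) : ℝ :=
  sSup ((fun z : ℂ => ‖z‖) '' spectrum ℂ (A.map Complex.ofReal))

/-- Entrywise absolute value (modulus) of a complex matrix. -/
noncomputable def cabs {m l : Type*} (A : Matrix m l ℂ) : Matrix m l ℝ :=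
  fun i j => ‖A i j‖

/-- Weighted maximum norm `‖A‖_∞^w = max_i (1/w_i) Σ_j |A_{i,j}| w_j`. -/
noncomputable def wnorm {m : Type*} [Fintype m]
    (A : Matrix m m ℂ) (w : m → ℝ) : ℝ :=
  ⨆ i, (1 / w i) * ∑ j, ‖A i j‖ * w j

/-!
Write `B = |A|`. If `ρ(B) < γ < 1`, Gelfand's formula gives a power `m ≥ 1` with
`‖Bᵐ‖_∞ < γᵐ`, i.e. `C = B / γ` satisfies `Cᵐ 1 ≤ 1`. The weight `w = Σ_{k<m} Cᵏ 1 ≥ 1`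
then satisfies `C w = w - 1 + Cᵐ 1 ≤ w`, that is `B w ≤ γ w`, which says
`‖A‖_∞^w ≤ γ`. Conversely, for an eigenpair `B v = μ v`, evaluating at a coordinate `i`
maximising `|v_i| / w_i` gives `|μ| ≤ ‖A‖_∞^w`.
-/

open Finset

theorem exists_pow_norm_lt_pow_of_spectralRadius_lt {A : Type*} [NormedRing A]
    [NormedAlgebra ℂ A] [CompleteSpace A] (a : A) {γ : ℝ}
    (h : spectralRadius ℂ a < ENNReal.ofReal γ) : ∃ m, 0 < m ∧ ‖a ^ m‖ < γ ^ m := by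
  obtain ⟨m, hlt, hm⟩ := ((spectrum.pow_norm_pow_one_div_tendsto_nhds_spectralRadius a
    |>.eventually_lt_const h).and (Filter.eventually_gt_atTop 0)).exists
  obtain ⟨hlt, hγ⟩ := ENNReal.ofReal_lt_ofReal_iff'.mp hlt
  refine ⟨m, hm, ?_⟩
  calc ‖a ^ m‖ = (‖a ^ m‖ ^ (1 / m : ℝ)) ^ m := by
        rw [one_div, Real.rpow_inv_natCast_pow (norm_nonneg _) hm.ne']
    _ < γ ^ m := pow_lt_pow_left₀ hlt (by positivity) hm.ne'

namespace Matrix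

variable {ι : Type*} [Fintype ι]

theorem exists_pow_sum_norm_lt_pow_of_spectralRadius_lt [DecidableEq ι] (M : Matrix ι ι ℂ)
    {γ : ℝ} (h : spectralRadius ℂ M < ENNReal.ofReal γ) :
    ∃ m, 0 < m ∧ ∀ i, ∑ j, ‖(M ^ m) i j‖ < γ ^ m := by
  let _ := Matrix.linftyOpNormedRing (n := ι) (α := ℂ)
  let _ := Matrix.linftyOpNormedAlgebra (n := ι) (R := ℂ) (α := ℂ)
  obtain ⟨m, hm, hlt⟩ := exists_pow_norm_lt_pow_of_spectralRadius_lt M h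
  refine ⟨m, hm, fun i => lt_of_le_of_lt ?_ hlt⟩
  rw [linfty_opNorm_def]
  simpa using NNReal.coe_le_coe.mpr
    (le_sup (f := fun i => ∑ j, ‖(M ^ m) i j‖₊) (mem_univ i))

theorem exists_mulVec_eq_smul_of_mem_spectrum {K : Type*} [Field K] [DecidableEq ι]
    {M : Matrix ι ι K} {μ : K} (hμ : μ ∈ spectrum K M) : ∃ v ≠ 0, M *ᵥ v = μ • v := by
  rw [← spectrum_toLin', ← Module.End.hasEigenvalue_iff_mem_spectrum] at hμ
  obtain ⟨v, hv⟩ := hμ.exists_hasEigenvector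
  exact ⟨v, hv.2, by simpa using hv.apply_eq_smul⟩

variable {B : Matrix ι ι ℝ}

theorem mulVec_nonneg_of_nonneg (hB : ∀ i j, 0 ≤ B i j) {v : ι → ℝ} (hv : 0 ≤ v) :
    0 ≤ B *ᵥ v :=
  fun i => sum_nonneg fun j _ => mul_nonneg (hB i j) (hv j)

theorem pow_mulVec_nonneg_of_nonneg [DecidableEq ι] (hB : ∀ i j, 0 ≤ B i j) {v : ι → ℝ}
    (hv : 0 ≤ v) (k : ℕ) : 0 ≤ B ^ k *ᵥ v := by
  induction k with
  | zero => simpa using hv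
  | succ k ih => rw [pow_succ', ← mulVec_mulVec]; exact mulVec_nonneg_of_nonneg hB ih

theorem exists_one_le_mulVec_le_self_of_pow_mulVec_one_le [DecidableEq ι]
    (hB : ∀ i j, 0 ≤ B i j) {m : ℕ} (hm : 0 < m) (hBm : B ^ m *ᵥ 1 ≤ 1) :
    ∃ w : ι → ℝ, 1 ≤ w ∧ B *ᵥ w ≤ w := by
  set f : ℕ → ι → ℝ := fun k => B ^ k *ᵥ 1 with hf
  have hf0 : f 0 = 1 := by simp [hf]
  have hstep : ∀ k, B *ᵥ f k = f (k + 1) := fun k => by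
    simp [hf, mulVec_mulVec, pow_succ']
  have hshift : B *ᵥ ∑ k ∈ range m, f k = ∑ k ∈ range m, f k + (f m - 1) := by
    rw [mulVec_sum, sum_congr rfl fun k _ => hstep k, ← hf0]
    have h := (sum_range_succ' f m).symm.trans (sum_range_succ f m)
    rw [← sub_eq_iff_eq_add.mpr h]
    abel
  refine ⟨∑ k ∈ range m, f k, ?_, ?_⟩
  · rw [← hf0]
    exact single_le_sum (fun k _ => pow_mulVec_nonneg_of_nonneg hB zero_le_one k)
      (mem_range.mpr hm)
  · rw [hshift]
    exact add_le_of_nonpos_right (sub_nonpos.mpr hBm)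

end Matrix

section SpectralRadius

variable {ι : Type*} [Fintype ι] [DecidableEq ι] {B : Matrix ι ι ℝ}

theorem norm_le_specRad {μ : ℂ} (hμ : μ ∈ spectrum ℂ (B.map Complex.ofReal)) :
    ‖μ‖ ≤ specRad B :=
  le_csSup ((finite_spectrum _).image _).bddAbove ⟨μ, hμ, rfl⟩

theorem specRad_le {c : ℝ} (hc : 0 ≤ c)
    (h : ∀ μ ∈ spectrum ℂ (B.map Complex.ofReal), ‖μ‖ ≤ c) : specRad B ≤ c :=
  Real.sSup_le (by rintro _ ⟨μ, hμ, rfl⟩; exact h μ hμ) hc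

theorem spectralRadius_map_ofReal_le_specRad (B : Matrix ι ι ℝ) :
    spectralRadius ℂ (B.map Complex.ofReal) ≤ ENNReal.ofReal (specRad B) :=
  iSup₂_le fun _ hμ => by
    rw [← enorm_eq_nnnorm, ← ofReal_norm]
    exact ENNReal.ofReal_le_ofReal (norm_le_specRad hμ)

theorem exists_pos_mulVec_le_smul_of_specRad_lt (hB : ∀ i j, 0 ≤ B i j) {γ : ℝ} (hγ : 0 < γ)
    (h : specRad B < γ) : ∃ w : ι → ℝ, (∀ i, 0 < w i) ∧ B *ᵥ w ≤ γ • w := by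
  obtain ⟨m, hm, hrow⟩ := (B.map Complex.ofReal).exists_pow_sum_norm_lt_pow_of_spectralRadius_lt
    ((spectralRadius_map_ofReal_le_specRad B).trans_lt
      ((ENNReal.ofReal_lt_ofReal_iff hγ).mpr h))
  have hpow : (B.map Complex.ofReal) ^ m = (B ^ m).map Complex.ofReal :=
    (map_pow Complex.ofRealHom.mapMatrix B m).symm
  have hC : ∀ i j, 0 ≤ (γ⁻¹ • B) i j := fun i j =>
    mul_nonneg (inv_nonneg.mpr hγ.le) (hB i j)
  have hCm : (γ⁻¹ • B) ^ m *ᵥ 1 ≤ 1 := by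
    intro i
    have hsum : ∑ j, (B ^ m) i j ≤ γ ^ m := (sum_le_sum fun j _ => le_abs_self _).trans
      (by simpa [hpow, Complex.norm_real] using (hrow i).le)
    calc ((γ⁻¹ • B) ^ m *ᵥ 1) i = γ⁻¹ ^ m * ∑ j, (B ^ m) i j := by
          simp [smul_pow, mulVec, dotProduct, mul_sum]
      _ ≤ γ⁻¹ ^ m * γ ^ m := by gcongr
      _ = 1 := by rw [← mul_pow, inv_mul_cancel₀ hγ.ne', one_pow]
  obtain ⟨w, hw1, hw⟩ := exists_one_le_mulVec_le_self_of_pow_mulVec_one_le hC hm hCm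
  refine ⟨w, fun i => one_pos.trans_le (hw1 i), ?_⟩
  calc B *ᵥ w = γ • ((γ⁻¹ • B) *ᵥ w) := by rw [smul_mulVec, smul_inv_smul₀ hγ.ne']
    _ ≤ γ • w := smul_le_smul_of_nonneg_left hw hγ.le

end SpectralRadius

section WeightedNorm

variable {ι : Type*} [Fintype ι] {w : ι → ℝ}

theorem wnorm_nonneg (M : Matrix ι ι ℂ) (hw : ∀ i, 0 < w i) : 0 ≤ wnorm M w :=
  Real.iSup_nonneg fun _ => mul_nonneg (one_div_nonneg.mpr (hw _).le)
    (sum_nonneg fun j _ => mul_nonneg (norm_nonneg _) (hw j).le)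

theorem sum_norm_mul_le_mul_wnorm (M : Matrix ι ι ℂ) (hw : ∀ i, 0 < w i) (i : ι) :
    ∑ j, ‖M i j‖ * w j ≤ w i * wnorm M w := by
  rw [← div_le_iff₀' (hw i), ← one_div_mul_eq_div]
  exact le_ciSup (f := fun i => 1 / w i * ∑ j, ‖M i j‖ * w j) (Finite.bddAbove_range _) i

theorem wnorm_le_of_cabs_mulVec_le (M : Matrix ι ι ℂ) (hw : ∀ i, 0 < w i) {c : ℝ}
    (hc : 0 ≤ c) (h : cabs M *ᵥ w ≤ c • w) : wnorm M w ≤ c :=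
  Real.iSup_le (fun i => by rw [one_div_mul_eq_div, div_le_iff₀ (hw i)]; exact h i) hc

theorem wnorm_map_ofReal_cabs (M : Matrix ι ι ℂ) :
    wnorm ((cabs M).map Complex.ofReal) w = wnorm M w := by
  simp [wnorm, cabs, Complex.norm_real]

theorem norm_le_wnorm_of_mem_spectrum [DecidableEq ι] {M : Matrix ι ι ℂ} (hw : ∀ i, 0 < w i)
    {μ : ℂ} (hμ : μ ∈ spectrum ℂ M) : ‖μ‖ ≤ wnorm M w := by
  obtain ⟨v, hv0, hv⟩ := exists_mulVec_eq_smul_of_mem_spectrum hμ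
  obtain ⟨j₀, hj₀⟩ := Function.ne_iff.mp hv0
  obtain ⟨i, -, hi⟩ := exists_max_image univ (fun j => ‖v j‖ / w j) ⟨j₀, mem_univ _⟩
  set t := ‖v i‖ / w i with ht
  have hbound : ∀ j, ‖v j‖ ≤ t * w j := fun j =>
    (div_le_iff₀ (hw j)).mp (hi j (mem_univ j))
  have hvi : 0 < ‖v i‖ := by
    have := (div_pos (norm_pos_iff.mpr hj₀) (hw j₀)).trans_le (hi j₀ (mem_univ j₀))
    exact (div_pos_iff_of_pos_right (hw i)).mp this
  have key : ‖μ‖ * ‖v i‖ ≤ ‖v i‖ * wnorm M w := calc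
    ‖μ‖ * ‖v i‖ = ‖(M *ᵥ v) i‖ := by rw [hv, Pi.smul_apply, smul_eq_mul, norm_mul]
    _ ≤ ∑ j, ‖M i j‖ * ‖v j‖ := by
        simpa only [mulVec, dotProduct, norm_mul] using norm_sum_le univ fun j => M i j * v j
    _ ≤ ∑ j, ‖M i j‖ * (t * w j) := by gcongr with j; exact hbound j
    _ = t * ∑ j, ‖M i j‖ * w j := by rw [mul_sum]; exact sum_congr rfl fun j _ => by ring
    _ ≤ t * (w i * wnorm M w) := by
        gcongr
        · exact div_nonneg (norm_nonneg _) (hw i).le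
        · exact sum_norm_mul_le_mul_wnorm M hw i
    _ = ‖v i‖ * wnorm M w := by rw [ht, ← mul_assoc, div_mul_cancel₀ _ (hw i).ne']
  exact le_of_mul_le_mul_right (by linarith) hvi

end WeightedNorm

theorem stmt2 {n : ℕ} (A : Matrix (Fin n) (Fin n) ℂ) :
    specRad (cabs A) < 1 ↔
      ∃ w : Fin n → ℝ, (∀ i, 0 < w i) ∧ wnorm A w < 1 := by
  constructor
  · intro h
    obtain ⟨γ, hγ, hγ1⟩ := exists_between (max_lt h one_pos)
    have hγ0 : 0 < γ := (le_max_right _ _).trans_lt hγ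
    obtain ⟨w, hw, hAw⟩ := exists_pos_mulVec_le_smul_of_specRad_lt
      (fun i j => norm_nonneg (A i j)) hγ0 ((le_max_left _ _).trans_lt hγ)
    exact ⟨w, hw, (wnorm_le_of_cabs_mulVec_le A hw hγ0.le hAw).trans_lt hγ1⟩
  · rintro ⟨w, hw, hlt⟩
    refine (specRad_le (wnorm_nonneg A hw) fun μ hμ => ?_).trans_lt hlt
    rw [← wnorm_map_ofReal_cabs]
    exact norm_le_wnorm_of_mem_spectrum hw hμ
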